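/- Counting roots in the upper half-plane via the Cauchy index over ℝ: if p is a monic complex polynomial with no roots on the real axis, then the number of roots of p in the open upper half-plane {z : Im z > 0}, counted with multiplicity, equals (deg(p) − Ind_{−∞}^{∞}(λt. Im(p(t))/Re(p(t)))) / 2, where the Cauchy index Ind_{−∞}^{∞} of the rational function (Im ∘ p)/(Re ∘ p) is the sum of its half-integer jumps over all of ℝ. -/

import Mathlib

/-!
Over the roots `r` of `p`, `θ t = ∑ arg (t - r)` is a continuous argument of `p t = ∏ (t - r)`
on the real line (no root is real), so `Im p / Re p = tan ∘ θ`. The function `tan ∘ θ` can only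
jump where `θ` meets an odd multiple of `π / 2`, and its jump there is the drop of the branch
index `⌊θ / π + 1 / 2⌋` across that point; hence the Cauchy index telescopes to the branch index
of `θ (-∞)` minus that of `θ (+∞)`. Each `arg (t - r)` tends to `0` at `+∞`, and at `-∞` to `-π`
or `π` according as `r` lies above or below the real axis. So `θ (+∞) = 0` and
`θ (-∞) = (deg p - 2 N) π`, where `N` counts the roots in the upper half-plane, and the index is
`deg p - 2 N`.
-/
open Complex Filter Topology Polynomial Set

open Classical in
noncomputable def jumpF (f : ℝ → ℝ) (F : Filter ℝ) : ℝ :=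
  if Tendsto f F atTop then 1/2 else if Tendsto f F atBot then -1/2 else 0

open scoped Real

noncomputable def tanBranch (x : ℝ) : ℤ := ⌊x / π + 1 / 2⌋

lemma tanBranch_eq_iff {x : ℝ} {k : ℤ} :
    tanBranch x = k ↔ (k - 1 / 2) * π ≤ x ∧ x < (k + 1 / 2) * π := by
  rw [tanBranch, Int.floor_eq_iff, ← sub_le_iff_le_add, ← lt_sub_iff_add_lt,
    le_div_iff₀ Real.pi_pos, div_lt_iff₀ Real.pi_pos]
  ring_nf

lemma cos_intCast_sub_half_mul_pi (k : ℤ) : Real.cos ((k - 1 / 2) * π) = 0 :=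
  Real.cos_eq_zero_iff.2 ⟨k - 1, by push_cast; ring⟩

lemma tanBranch_eq_iff_of_cos_ne_zero {x : ℝ} (hx : Real.cos x ≠ 0) {k : ℤ} :
    tanBranch x = k ↔ x ∈ Ioo ((k - 1 / 2) * π) ((k + 1 / 2) * π) := by
  rw [tanBranch_eq_iff]
  refine ⟨fun h => ⟨h.1.lt_of_ne ?_, h.2⟩, fun h => ⟨h.1.le, h.2⟩⟩
  rintro rfl
  exact hx (cos_intCast_sub_half_mul_pi k)

lemma tanBranch_intCast_mul_pi (k : ℤ) : tanBranch (k * π) = k :=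
  tanBranch_eq_iff.2 ⟨by nlinarith [Real.pi_pos], by nlinarith [Real.pi_pos]⟩

lemma tanBranch_zero : tanBranch 0 = 0 := by
  simpa using tanBranch_intCast_mul_pi 0

lemma eventually_tanBranch_eq {x : ℝ} (hx : Real.cos x ≠ 0) :
    ∀ᶠ y in 𝓝 x, tanBranch y = tanBranch x := by
  have hmem := (tanBranch_eq_iff_of_cos_ne_zero hx).1 rfl
  filter_upwards [isOpen_Ioo.mem_nhds hmem] with y hy
  exact tanBranch_eq_iff.2 ⟨hy.1.le, hy.2⟩

lemma tanBranch_eq_of_forall_cos_ne_zero {θ : ℝ → ℝ} {a b : ℝ} (hθ : ContinuousOn θ (Icc a b))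
    (hab : a ≤ b) (hcos : ∀ t ∈ Icc a b, Real.cos (θ t) ≠ 0) :
    tanBranch (θ a) = tanBranch (θ b) :=
  isPreconnected_Icc.constant (f := fun t => tanBranch (θ t))
    (fun t ht => (EventuallyEq.continuousAt (f := tanBranch)
      (eventually_tanBranch_eq (hcos t ht))).comp_continuousWithinAt (hθ t ht))
    (left_mem_Icc.2 hab) (right_mem_Icc.2 hab)

lemma jumpF_eq_zero_of_tendsto {f : ℝ → ℝ} {F : Filter ℝ} [F.NeBot] {L : ℝ}
    (h : Tendsto f F (𝓝 L)) : jumpF f F = 0 := by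
  rw [jumpF, if_neg (h.not_tendsto (disjoint_nhds_atTop L)),
    if_neg (h.not_tendsto (disjoint_nhds_atBot L))]

lemma jumpF_of_tendsto_atTop {f : ℝ → ℝ} {F : Filter ℝ} (h : Tendsto f F atTop) :
    jumpF f F = 1 / 2 :=
  if_pos h

lemma jumpF_of_tendsto_atBot {f : ℝ → ℝ} {F : Filter ℝ} [F.NeBot] (h : Tendsto f F atBot) :
    jumpF f F = -1 / 2 := by
  rw [jumpF, if_neg (h.not_tendsto disjoint_atBot_atTop), if_pos h]

lemma eq_neg_pi_div_two_or_eq_pi_div_two_of_cos_eq_zero {x : ℝ} (hx : Real.cos x = 0)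
    (hmem : x ∈ Icc (-(π / 2)) (π / 2)) : x = -(π / 2) ∨ x = π / 2 := by
  have hIoo : x ∉ Ioo (-(π / 2)) (π / 2) := fun h => (Real.cos_pos_of_mem_Ioo h).ne' hx
  have hdiff : x ∈ Icc (-(π / 2)) (π / 2) \ Ioo (-(π / 2)) (π / 2) := ⟨hmem, hIoo⟩
  rwa [Icc_sdiff_Ioo_same (by linarith [Real.pi_pos]), mem_insert_iff, mem_singleton_iff] at hdiff

-- `c` is an end `(k ± 1 / 2) * π` of the branch, so the right-hand side is `± 1 / 2`.
lemma jumpF_tan_comp_of_tendsto {θ : ℝ → ℝ} {F : Filter ℝ} [F.NeBot] {c : ℝ} {k : ℤ}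
    (hθ : Tendsto θ F (𝓝 c)) (hc : Real.cos c = 0)
    (hk : ∀ᶠ t in F, Real.cos (θ t) ≠ 0 ∧ tanBranch (θ t) = k) :
    jumpF (fun t => Real.tan (θ t)) F = c / π - k := by
  set φ := fun t => θ t - k * π
  have htan : (fun t => Real.tan (θ t)) = Real.tan ∘ φ := by
    funext t
    rw [Function.comp_apply, ← Real.tan_add_int_mul_pi (φ t) k, sub_add_cancel]
  have hφ : ∀ᶠ t in F, φ t ∈ Ioo (-(π / 2)) (π / 2) := by
    filter_upwards [hk] with t ⟨hcos, hbr⟩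
    obtain ⟨h1, h2⟩ := (tanBranch_eq_iff_of_cos_ne_zero hcos).1 hbr
    constructor <;> simp only [φ] <;> linarith
  have hlim : Tendsto φ F (𝓝 (c - k * π)) := hθ.sub_const _
  have hmem : c - k * π ∈ Icc (-(π / 2)) (π / 2) :=
    isClosed_Icc.mem_of_tendsto hlim (hφ.mono fun t ht => Ioo_subset_Icc_self ht)
  have hend : c - k * π = -(π / 2) ∨ c - k * π = π / 2 := by
    refine eq_neg_pi_div_two_or_eq_pi_div_two_of_cos_eq_zero ?_ hmem
    rw [← Real.cos_neg, neg_sub, Real.cos_int_mul_pi_sub, hc, mul_zero]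
  rw [htan]
  rcases hend with hbot | htop
  · have hlim' : Tendsto φ F (𝓝[>] (-(π / 2))) :=
      tendsto_nhdsWithin_iff.2 ⟨hbot ▸ hlim, hφ.mono fun _ ht => ht.1⟩
    rw [jumpF_of_tendsto_atBot (Real.tendsto_tan_neg_pi_div_two.comp hlim'),
      show c = (k - 1 / 2) * π by linarith]
    field_simp
    ring
  · have hlim' : Tendsto φ F (𝓝[<] (π / 2)) :=
      tendsto_nhdsWithin_iff.2 ⟨htop ▸ hlim, hφ.mono fun _ ht => ht.2⟩
    rw [jumpF_of_tendsto_atTop (Real.tendsto_tan_pi_div_two.comp hlim'),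
      show c = (k + 1 / 2) * π by linarith]
    field_simp
    ring

noncomputable def cauchyJump (f : ℝ → ℝ) (x : ℝ) : ℝ := jumpF f (𝓝[>] x) - jumpF f (𝓝[<] x)

lemma cauchyJump_tan_comp_of_cos_ne_zero {θ : ℝ → ℝ} {x : ℝ} (hθ : ContinuousAt θ x)
    (hx : Real.cos (θ x) ≠ 0) : cauchyJump (fun t => Real.tan (θ t)) x = 0 := by
  have h : Tendsto (fun t => Real.tan (θ t)) (𝓝 x) (𝓝 (Real.tan (θ x))) :=
    ((Real.continuousAt_tan.2 hx).comp hθ).tendsto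
  rw [cauchyJump, jumpF_eq_zero_of_tendsto (h.mono_left nhdsWithin_le_nhds),
    jumpF_eq_zero_of_tendsto (h.mono_left nhdsWithin_le_nhds), sub_zero]

lemma cauchyJump_tan_comp_of_cos_eq_zero {θ : ℝ → ℝ} (hθ : Continuous θ) {a x b : ℝ}
    (hax : a < x) (hxb : x < b) (hx : Real.cos (θ x) = 0)
    (hne : ∀ t ∈ Icc a b, t ≠ x → Real.cos (θ t) ≠ 0) :
    cauchyJump (fun t => Real.tan (θ t)) x = tanBranch (θ a) - tanBranch (θ b) := by
  have hright : ∀ᶠ t in 𝓝[>] x, Real.cos (θ t) ≠ 0 ∧ tanBranch (θ t) = tanBranch (θ b) := by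
    filter_upwards [Ioc_mem_nhdsGT hxb] with t ⟨hxt, htb⟩
    have hcos : ∀ s ∈ Icc t b, Real.cos (θ s) ≠ 0 := fun s hs =>
      hne s ⟨by linarith [hs.1], hs.2⟩ (by linarith [hs.1])
    exact ⟨hcos t ⟨le_rfl, htb⟩, tanBranch_eq_of_forall_cos_ne_zero hθ.continuousOn htb hcos⟩
  have hleft : ∀ᶠ t in 𝓝[<] x, Real.cos (θ t) ≠ 0 ∧ tanBranch (θ t) = tanBranch (θ a) := by
    filter_upwards [Ico_mem_nhdsLT hax] with t ⟨hat, htx⟩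
    have hcos : ∀ s ∈ Icc a t, Real.cos (θ s) ≠ 0 := fun s hs =>
      hne s ⟨hs.1, by linarith [hs.2]⟩ (by linarith [hs.2])
    exact ⟨hcos t ⟨hat, le_rfl⟩, (tanBranch_eq_of_forall_cos_ne_zero hθ.continuousOn hat hcos).symm⟩
  have hlim := hθ.tendsto x
  rw [cauchyJump, jumpF_tan_comp_of_tendsto (hlim.mono_left nhdsWithin_le_nhds) hx hright,
    jumpF_tan_comp_of_tendsto (hlim.mono_left nhdsWithin_le_nhds) hx hleft]
  ring

lemma sum_cauchyJump_tan_comp_eq {θ : ℝ → ℝ} (hθ : Continuous θ) {a b : ℝ} (hab : a ≤ b)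
    (S : Finset ℝ) (hS : ∀ z ∈ S, z ∈ Ioo a b ∧ Real.cos (θ z) = 0)
    (hzeros : ∀ t ∈ Icc a b, Real.cos (θ t) = 0 → t ∈ S) :
    ∑ x ∈ S, cauchyJump (fun t => Real.tan (θ t)) x = tanBranch (θ a) - tanBranch (θ b) := by
  classical
  induction S using Finset.induction_on_max generalizing b with
  | empty =>
    rw [Finset.sum_empty, tanBranch_eq_of_forall_cos_ne_zero hθ.continuousOn hab
      fun t ht h => by simpa using hzeros t ht h, sub_self]
  | insert m S hlt ih =>
    obtain ⟨⟨ham, hmb⟩, hm⟩ := hS m (Finset.mem_insert_self m S)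
    obtain ⟨s, ⟨has, hsm⟩, hSs⟩ : ∃ s ∈ Ioo a m, ∀ z ∈ S, z < s :=
      (Filter.Eventually.and (Ioo_mem_nhdsLT ham) (S.eventually_all.2 fun z hz =>
        Filter.mem_of_superset (Ioo_mem_nhdsLT (hlt z hz)) fun _ h => h.1)).exists
    have hSz : ∀ z ∈ S, z ∈ Ioo a s ∧ Real.cos (θ z) = 0 := fun z hz =>
      have hz' := hS z (Finset.mem_insert_of_mem hz)
      ⟨⟨hz'.1.1, hSs z hz⟩, hz'.2⟩
    have hzeros_left : ∀ t ∈ Icc a s, Real.cos (θ t) = 0 → t ∈ S := fun t ht hcos => by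
      rcases Finset.mem_insert.1 (hzeros t ⟨ht.1, by linarith [ht.2]⟩ hcos) with rfl | h
      · linarith [ht.2]
      · exact h
    have hzeros_right : ∀ t ∈ Icc s b, t ≠ m → Real.cos (θ t) ≠ 0 := fun t ht htm hcos => by
      rcases Finset.mem_insert.1 (hzeros t ⟨by linarith [ht.1], ht.2⟩ hcos) with rfl | h
      · exact htm rfl
      · linarith [ht.1, hSs t h]
    rw [Finset.sum_insert fun h => (hlt m h).false,
      cauchyJump_tan_comp_of_cos_eq_zero hθ hsm hmb hm hzeros_right,
      ih has.le hSz hzeros_left]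
    ring

theorem finsum_cauchyJump_tan_comp_eq {θ : ℝ → ℝ} (hθ : Continuous θ)
    (hfin : {t | Real.cos (θ t) = 0}.Finite) {a b : ℝ}
    (hbot : Tendsto θ atBot (𝓝 a)) (htop : Tendsto θ atTop (𝓝 b))
    (ha : Real.cos a ≠ 0) (hb : Real.cos b ≠ 0) :
    ∑ᶠ x, cauchyJump (fun t => Real.tan (θ t)) x = tanBranch a - tanBranch b := by
  set Z := hfin.toFinset
  have hsupp : Function.support (cauchyJump fun t => Real.tan (θ t)) ⊆ Z := fun x hx => by
    by_contra hxZ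
    exact hx (cauchyJump_tan_comp_of_cos_ne_zero hθ.continuousAt
      fun h => hxZ (hfin.mem_toFinset.2 h))
  obtain ⟨y, hyZ, hy⟩ : ∃ y, (∀ z ∈ Z, y < z) ∧ tanBranch (θ y) = tanBranch a :=
    ((Z.eventually_all.2 fun z _ => eventually_lt_atBot z).and
      (hbot.eventually (eventually_tanBranch_eq ha))).exists
  obtain ⟨y', hy'Z, hyy', hy'⟩ :
      ∃ y', (∀ z ∈ Z, z < y') ∧ y ≤ y' ∧ tanBranch (θ y') = tanBranch b :=
    ((Z.eventually_all.2 fun z _ => eventually_gt_atTop z).and ((eventually_ge_atTop y).and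
      (htop.eventually (eventually_tanBranch_eq hb)))).exists
  rw [finsum_eq_sum_of_support_subset _ hsupp, sum_cauchyJump_tan_comp_eq hθ hyy' Z
    (fun z hz => ⟨⟨hyZ z hz, hy'Z z hz⟩, hfin.mem_toFinset.1 hz⟩)
    (fun t _ h => hfin.mem_toFinset.2 h), hy, hy']

lemma Multiset.sum_map_ite_neg_const {α : Type*} (p : α → Prop) [DecidablePred p]
    (s : Multiset α) (c : ℝ) :
    (s.map fun a => if p a then -c else c).sum
      = ((Multiset.card s - 2 * Multiset.card (s.filter p) : ℤ) : ℝ) * c := by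
  induction s using Multiset.induction_on with
  | empty => simp
  | cons a s ih =>
    rw [map_cons, sum_cons, ih, card_cons]
    by_cases h : p a
    · rw [if_pos h, filter_cons_of_pos _ h, card_cons]
      push_cast
      ring
    · rw [if_neg h, filter_cons_of_neg _ h]
      push_cast
      ring

lemma Multiset.finsum_mem_count_eq_card_filter {α M : Type*} [DecidableEq α]
    [AddCommMonoidWithOne M] (s : Multiset α) (p : α → Prop) [DecidablePred p] :
    ∑ᶠ a ∈ {a | p a}, (s.count a : M) = Multiset.card (s.filter p) := by
  rw [finsum_mem_eq_sum_of_inter_support_eq (t := (s.filter p).toFinset)]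
  · rw [← Multiset.toFinset_sum_count_eq, Nat.cast_sum]
    refine Finset.sum_congr rfl fun a ha => ?_
    rw [Multiset.count_filter_of_pos (Multiset.of_mem_filter (Multiset.mem_toFinset.1 ha))]
  · ext a
    simp only [mem_inter_iff, mem_ofPred_eq, Function.mem_support, Finset.mem_coe,
      Multiset.mem_toFinset, Multiset.mem_filter]
    refine ⟨fun ⟨hp, hc⟩ => ⟨⟨?_, hp⟩, hc⟩, fun ⟨⟨_, hp⟩, hc⟩ => ⟨hp, hc⟩⟩
    contrapose! hc
    rw [Multiset.count_eq_zero_of_notMem hc, Nat.cast_zero]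

namespace Complex

lemma coe_sum_arg_eq_arg_prod {Z : Multiset ℂ} (hZ : (0 : ℂ) ∉ Z) :
    (((Z.map arg).sum : ℝ) : Real.Angle) = arg Z.prod := by
  induction Z using Multiset.induction_on with
  | empty => simp
  | cons z Z ih =>
    rw [Multiset.mem_cons, not_or] at hZ
    rw [Multiset.map_cons, Multiset.sum_cons, Multiset.prod_cons, Real.Angle.coe_add, ih hZ.2,
      arg_mul_coe_angle (Ne.symm hZ.1) (Multiset.prod_ne_zero hZ.2)]

lemma tan_eq_im_div_re_of_coe_eq_arg {z : ℂ} {θ : ℝ} (h : (θ : Real.Angle) = arg z) :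
    Real.tan θ = z.im / z.re := by
  rw [← Real.Angle.tan_coe, h, Real.Angle.tan_coe, tan_arg]

lemma cos_eq_zero_iff_re_eq_zero_of_coe_eq_arg {z : ℂ} (hz : z ≠ 0) {θ : ℝ}
    (h : (θ : Real.Angle) = arg z) : Real.cos θ = 0 ↔ z.re = 0 := by
  rw [← Real.Angle.cos_coe, h, Real.Angle.cos_coe, cos_arg hz, div_eq_zero_iff,
    or_iff_left (norm_ne_zero_iff.2 hz)]

lemma ofReal_sub_mem_slitPlane {r : ℂ} (hr : r.im ≠ 0) (t : ℝ) : (t : ℂ) - r ∈ slitPlane :=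
  mem_slitPlane_iff.2 (Or.inr (by simpa using hr))

lemma tendsto_arg_ofReal_sub_atTop (r : ℂ) :
    Tendsto (fun t : ℝ => arg ((t : ℂ) - r)) atTop (𝓝 0) := by
  have hnorm : Tendsto (fun t : ℝ => ‖(t : ℂ) - r‖) atTop atTop :=
    tendsto_atTop_mono (fun t => by simpa using re_le_norm ((t : ℂ) - r))
      (tendsto_atTop_add_const_right _ (-r.re) tendsto_id)
  have h := (Real.continuous_arcsin.tendsto 0).comp
    (tendsto_const_nhds (x := -r.im).div_atTop hnorm)
  rw [Real.arcsin_zero] at h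
  refine h.congr' ?_
  filter_upwards [eventually_ge_atTop r.re] with t ht
  rw [Function.comp_apply, arg_of_re_nonneg (by simpa using ht)]
  simp

lemma tendsto_arg_ofReal_sub_atBot {r : ℂ} (hr : r.im ≠ 0) :
    Tendsto (fun t : ℝ => arg ((t : ℂ) - r)) atBot (𝓝 (if 0 < r.im then -π else π)) := by
  have h := (tendsto_arg_ofReal_sub_atTop (-r)).comp tendsto_neg_atBot_atTop
  have hneg : ∀ t : ℝ, (t : ℂ) - r = -(((-t : ℝ) : ℂ) - -r) := fun t => by push_cast; ring
  have him : ∀ t : ℝ, (((-t : ℝ) : ℂ) - -r).im = r.im := fun t => by simp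
  split_ifs with hpos
  · have h' := h.sub_const π
    rw [zero_sub] at h'
    refine h'.congr fun t => ?_
    rw [Function.comp_apply, hneg t, arg_neg_eq_arg_sub_pi_of_im_pos (by rwa [him])]
  · have h' := h.add_const π
    rw [zero_add] at h'
    refine h'.congr fun t => ?_
    rw [Function.comp_apply, hneg t,
      arg_neg_eq_arg_add_pi_of_im_neg (by rw [him]; exact lt_of_le_of_ne (not_lt.1 hpos) hr)]

end Complex

noncomputable def argSum (R : Multiset ℂ) (t : ℝ) : ℝ := (R.map fun r => arg ((t : ℂ) - r)).sum

section argSum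

variable {R : Multiset ℂ}

lemma coe_argSum (hR : ∀ r ∈ R, r.im ≠ 0) (t : ℝ) :
    (argSum R t : Real.Angle) = arg (R.map fun r => (t : ℂ) - r).prod := by
  rw [argSum, ← Complex.coe_sum_arg_eq_arg_prod, Multiset.map_map]
  · rfl
  · simp only [Multiset.mem_map, not_exists, not_and]
    exact fun r hr => (slitPlane_ne_zero (ofReal_sub_mem_slitPlane (hR r hr) t))

lemma continuous_argSum (hR : ∀ r ∈ R, r.im ≠ 0) : Continuous (argSum R) :=
  continuous_multiset_sum (f := fun r (t : ℝ) => arg ((t : ℂ) - r)) _ fun r hr =>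
    continuous_iff_continuousAt.2 fun t =>
      (continuousAt_arg (ofReal_sub_mem_slitPlane (hR r hr) t)).comp
        (f := fun t : ℝ => (t : ℂ) - r) (by fun_prop)

lemma tendsto_argSum_atTop : Tendsto (argSum R) atTop (𝓝 0) := by
  have h := tendsto_multiset_sum R fun r _ => tendsto_arg_ofReal_sub_atTop r
  rwa [Multiset.map_const', Multiset.sum_replicate, smul_zero] at h

lemma tendsto_argSum_atBot (hR : ∀ r ∈ R, r.im ≠ 0) :
    Tendsto (argSum R) atBot
      (𝓝 ((Multiset.card R - 2 * Multiset.card (R.filter fun r => 0 < r.im) : ℤ) * π)) := by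
  rw [← Multiset.sum_map_ite_neg_const]
  exact tendsto_multiset_sum R fun r hr => tendsto_arg_ofReal_sub_atBot (hR r hr)

end argSum

lemma Polynomial.finite_setOf_re_eval_eq_zero {p : ℂ[X]} (hp : p.leadingCoeff.re ≠ 0) :
    {t : ℝ | (p.eval (t : ℂ)).re = 0}.Finite := by
  set q := p + p.map (starRingEnd ℂ)
  have hq : ∀ t : ℝ, q.eval (t : ℂ) = (2 * (p.eval (t : ℂ)).re : ℝ) := fun t => by
    have hconj := eval₂_at_apply (p := p) (starRingEnd ℂ) (t : ℂ)
    rw [conj_ofReal] at hconj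
    rw [eval_add, eval_map, hconj, add_conj]
  have hq0 : q ≠ 0 := fun h => hp <| by
    have := congrArg (fun q => q.coeff p.natDegree) h
    rw [coeff_add, coeff_map, ← leadingCoeff, add_conj, coeff_zero, ofReal_eq_zero] at this
    linarith
  refine ((finite_setOfPred_isRoot hq0).preimage ofReal_injective.injOn).subset fun t ht => ?_
  simp_all [IsRoot]

lemma Polynomial.im_ne_zero_of_mem_roots {p : ℂ[X]} (hreal : ∀ x : ℝ, p.eval (x : ℂ) ≠ 0)
    {r : ℂ} (hr : r ∈ p.roots) : r.im ≠ 0 := fun him => hreal r.re <| by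
  rw [show ((r.re : ℝ) : ℂ) = r from Complex.ext rfl (by simp [him])]
  exact (mem_roots (ne_zero_of_mem_roots hr)).1 hr

lemma Polynomial.coe_argSum_roots {p : ℂ[X]} (hp : p.Monic)
    (hreal : ∀ x : ℝ, p.eval (x : ℂ) ≠ 0) (t : ℝ) :
    (argSum p.roots t : Real.Angle) = arg (p.eval (t : ℂ)) := by
  rw [coe_argSum fun r => im_ne_zero_of_mem_roots hreal]
  conv_rhs => rw [← prod_multiset_X_sub_C_of_monic_of_roots_card_eq hp
    IsAlgClosed.card_roots_eq_natDegree]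
  simp [eval_multiset_prod, Multiset.map_map]

theorem proots_upper_cindex_eq (p : Polynomial ℂ)
    (hmonic : p.Monic) (hreal : ∀ x : ℝ, p.eval (x : ℂ) ≠ 0) :
    (∑ᶠ z ∈ {z : ℂ | 0 < z.im}, (p.rootMultiplicity z : ℝ))
      = ((p.natDegree : ℝ)
          - ∑ᶠ x : ℝ,
              (jumpF (fun t => (p.eval (t : ℂ)).im / (p.eval (t : ℂ)).re) (𝓝[>] x)
               - jumpF (fun t => (p.eval (t : ℂ)).im / (p.eval (t : ℂ)).re) (𝓝[<] x))) / 2 := by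
  have hR : ∀ r ∈ p.roots, r.im ≠ 0 := fun r => im_ne_zero_of_mem_roots hreal
  have hangle := coe_argSum_roots hmonic hreal
  have htan : (fun t : ℝ => (p.eval (t : ℂ)).im / (p.eval (t : ℂ)).re)
      = fun t => Real.tan (argSum p.roots t) :=
    funext fun t => (tan_eq_im_div_re_of_coe_eq_arg (hangle t)).symm
  have hzeros : {t | Real.cos (argSum p.roots t) = 0} = {t : ℝ | (p.eval (t : ℂ)).re = 0} :=
    Set.ext fun t => cos_eq_zero_iff_re_eq_zero_of_coe_eq_arg (hreal t) (hangle t)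
  have hindex := finsum_cauchyJump_tan_comp_eq (continuous_argSum hR)
    (hzeros ▸ finite_setOf_re_eval_eq_zero (by simp [hmonic.leadingCoeff]))
    (tendsto_argSum_atBot hR) tendsto_argSum_atTop
    (by rw [Real.cos_int_mul_pi]; exact zpow_ne_zero _ (by norm_num)) (by simp)
  change _ = (_ - ∑ᶠ x, cauchyJump _ x) / 2
  simp_rw [← count_roots]
  rw [htan, hindex, tanBranch_intCast_mul_pi, tanBranch_zero,
    Multiset.finsum_mem_count_eq_card_filter, IsAlgClosed.card_roots_eq_natDegree]
  push_cast
  ring
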